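/- Let S be a K-convex monotone semigroup on X with S(t)0 ≥ 0 for all t ≥ 0, and let p be a lattice seminorm on Y. Then for all t ≥ 0 and all u, v ∈ X one has p(S(t)u − v) ≤ p(K(t)u − v) + p(K(t)(−u) + v). -/

import Mathlib

/-!
Taking `λ = 0` in `K`-convexity gives `S(t)u ≤ K(t)u`; taking `λ = 1/2`, `v = -u` and using
`S(t)0 ≥ 0` gives `-K(t)(-u) ≤ S(t)u`. So `S(t)u - v` lies between `-(K(t)(-u) + v)` and
`K(t)u - v`, hence `|S(t)u - v| ≤ |K(t)u - v| + |K(t)(-u) + v|`, and a lattice seminorm is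
monotone in `|·|` and subadditive.
-/

section LatticeSeminorm

variable {Y : Type*} [Lattice Y] [AddCommGroup Y] [CovariantClass Y Y (· + ·) (· ≤ ·)]

theorem le_add_of_le_of_neg_le_of_abs_mono (p : Y → ℝ)
    (hp_add : ∀ y z : Y, p (y + z) ≤ p y + p z)
    (hp_mono : ∀ y z : Y, |y| ≤ |z| → p y ≤ p z)
    {w a b : Y} (hwa : w ≤ a) (hbw : -b ≤ w) : p w ≤ p a + p b := by
  have habs : |w| ≤ |a| + |b| := abs_le'.mpr
    ⟨hwa.trans ((le_abs_self a).trans (le_add_of_nonneg_right (abs_nonneg b))),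
     (neg_le.mp hbw).trans ((le_abs_self b).trans (le_add_of_nonneg_left (abs_nonneg a)))⟩
  calc p w ≤ p (|a| + |b|) :=
        hp_mono _ _ (by rwa [abs_of_nonneg (add_nonneg (abs_nonneg a) (abs_nonneg b))])
    _ ≤ p |a| + p |b| := hp_add _ _
    _ ≤ p a + p b := add_le_add (hp_mono _ _ (abs_abs a).le) (hp_mono _ _ (abs_abs b).le)

end LatticeSeminorm

section KConvex

variable {X Y : Type*} [AddCommGroup X] [Module ℝ X]
  [AddCommGroup Y] [Module ℝ Y] [Preorder Y]
  (ι : X →ₗ[ℝ] Y) (S : X → X) (K : X → Y)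

def IsKConvex : Prop :=
  ∀ u v : X, ∀ l : ℝ, l ∈ Set.Icc (0 : ℝ) 1 →
    ι (S (l • u + (1 - l) • v)) ≤ l • ι (S u) + (1 - l) • K v

theorem le_of_K_convex
    (hK : IsKConvex ι S K)
    (u : X) : ι (S u) ≤ K u := by
  simpa using hK 0 u 0 ⟨le_rfl, zero_le_one⟩

theorem neg_le_of_K_convex [CovariantClass Y Y (· + ·) (· ≤ ·)]
    (hK : IsKConvex ι S K)
    (hS : 0 ≤ ι (S 0)) (u : X) : -K (-u) ≤ ι (S u) := by
  have hmid : 0 ≤ (1 / 2 : ℝ) • ι (S u) + (1 / 2 : ℝ) • K (-u) := by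
    have h := hK u (-u) (1 / 2) ⟨by norm_num, by norm_num⟩
    norm_num at h
    exact hS.trans (by simpa using h)
  have hsum : ι (S u) + K (-u) = ((1 / 2 : ℝ) • ι (S u) + (1 / 2 : ℝ) • K (-u)) +
      ((1 / 2 : ℝ) • ι (S u) + (1 / 2 : ℝ) • K (-u)) := by
    rw [← two_smul ℝ, smul_add, smul_smul, smul_smul]
    norm_num
  exact neg_le_iff_add_nonneg.mpr (hsum ▸ add_nonneg hmid hmid)

end KConvex

theorem seminorm_S_sub_le_of_K_convex_general {X Y : Type*}
    [Lattice X] [AddCommGroup X] [Module ℝ X]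
    [Lattice Y] [AddCommGroup Y] [Module ℝ Y]
    [CovariantClass Y Y (· + ·) (· ≤ ·)]
    (ι : X →ₗ[ℝ] Y)
    (hι_order : ∀ u v : X, u ≤ v ↔ ι u ≤ ι v)
    (S : ℝ → X → X) (K : ℝ → X → Y)
    (hKconv : ∀ t : ℝ, 0 ≤ t → ∀ u v : X, ∀ l : ℝ, l ∈ Set.Icc (0 : ℝ) 1 →
      ι (S t (l • u + (1 - l) • v)) ≤ l • ι (S t u) + (1 - l) • K t v)
    (hSpos : ∀ t : ℝ, 0 ≤ t → 0 ≤ S t 0)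
    (p : Y → ℝ)
    (hp_add : ∀ y z : Y, p (y + z) ≤ p y + p z)
    (hp_lattice : ∀ y z : Y, y ⊔ (-y) ≤ z ⊔ (-z) → p y ≤ p z) :
    ∀ t : ℝ, 0 ≤ t → ∀ u v : X,
      p (ι (S t u) - ι v) ≤ p (K t u - ι v) + p (K t (-u) + ι v) := by
  intro t ht u v
  have hS0_nonneg : 0 ≤ ι (S t 0) := by simpa using (hι_order 0 (S t 0)).mp (hSpos t ht)
  have hupper : ι (S t u) - ι v ≤ K t u - ι v :=
    sub_le_sub_right (le_of_K_convex ι (S t) (K t) (hKconv t ht) u) _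
  have hlower : -(K t (-u) + ι v) ≤ ι (S t u) - ι v := by
    rw [neg_add, ← sub_eq_add_neg]
    exact sub_le_sub_right (neg_le_of_K_convex ι (S t) (K t) (hKconv t ht) hS0_nonneg u) _
  exact le_add_of_le_of_neg_le_of_abs_mono p hp_add hp_lattice hupper hlower

/-- Let `S` be a `K`-convex monotone semigroup on a vector sublattice
`X ⊆ Y` (encoded via a linear lattice-order embedding `ι : X →ₗ[ℝ] Y`) with `S(t)0 ≥ 0`
for all `t ≥ 0`, and let `p` be a lattice seminorm on `Y`. Then for all `t ≥ 0` and
`u, v ∈ X` one has `p(S(t)u − v) ≤ p(K(t)u − v) + p(K(t)(−u) + v)`. -/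
theorem seminorm_S_sub_le_of_K_convex {X Y : Type*}
    [Lattice X] [AddCommGroup X] [Module ℝ X]
    [CovariantClass X X (· + ·) (· ≤ ·)] [PosSMulMono ℝ X]
    [Lattice Y] [AddCommGroup Y] [Module ℝ Y]
    [CovariantClass Y Y (· + ·) (· ≤ ·)] [PosSMulMono ℝ Y]
    (ι : X →ₗ[ℝ] Y)
    (hι_order : ∀ u v : X, u ≤ v ↔ ι u ≤ ι v)
    (hι_sup : ∀ u v : X, ι (u ⊔ v) = ι u ⊔ ι v)
    (S : ℝ → X → X) (K : ℝ → X → Y)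
    (hS0 : ∀ u : X, S 0 u = u)
    (hSsem : ∀ s t : ℝ, 0 ≤ s → 0 ≤ t → ∀ u : X, S t (S s u) = S (t + s) u)
    (hSmono : ∀ t : ℝ, 0 ≤ t → ∀ u v : X, u ≤ v → S t u ≤ S t v)
    (hKconv : ∀ t : ℝ, 0 ≤ t → ∀ u v : X, ∀ l : ℝ, l ∈ Set.Icc (0 : ℝ) 1 →
      ι (S t (l • u + (1 - l) • v)) ≤ l • ι (S t u) + (1 - l) • K t v)
    (hSpos : ∀ t : ℝ, 0 ≤ t → 0 ≤ S t 0)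
    (p : Y → ℝ)
    (hp_nonneg : ∀ y : Y, 0 ≤ p y)
    (hp_add : ∀ y z : Y, p (y + z) ≤ p y + p z)
    (hp_smul : ∀ (r : ℝ) (y : Y), p (r • y) = |r| * p y)
    (hp_lattice : ∀ y z : Y, y ⊔ (-y) ≤ z ⊔ (-z) → p y ≤ p z) :
    ∀ t : ℝ, 0 ≤ t → ∀ u v : X,
      p (ι (S t u) - ι v) ≤ p (K t u - ι v) + p (K t (-u) + ι v) :=
  seminorm_S_sub_le_of_K_convex_general ι hι_order S K hKconv hSpos p hp_add hp_lattice
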